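/- For all constants ε, δ ∈ (0,1) and every constant 0 < α < δ, there exists N such that the following holds for every field F, every n ≥ N, and every m: if M ∈ F^{m×n} admits no factorization M = Q·P with Q ∈ F^{m×s}, s ≤ n/(1−ε), each row of Q having at most n^δ nonzero entries, and P ∈ F^{s×n}, then M contains a submatrix M' ∈ F^{m×n'}, formed by n' ≥ n^α of the columns of M, which is (m, n', ε·n', n^α)-row rigid. -/

import Mathlib

/-!
Suppose no submatrix of `M` on at least `t = n^α` columns is rigid. A submatrix `A` on `n' ≥ t`
columns is then `N + E` with at most `t` nonzeros per row of `E` and `rank N < ε n'`, and `N` is a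
combination of `d < ε n'` of its own columns, which are the corresponding columns of `A` minus
those of `E`. Factoring these `d` columns of `A` recursively and appending `E` to the left factor
factors `A` with inner dimension `≤ d/(1-ε) + n' ≤ n'/(1-ε)`, while the row sparsity grows by `t`
per level. Since the number of columns shrinks by a factor `ε` per level, the recursion stops
below `t` columns after `k ≈ (1-α) log n / log(1/ε)` levels, and `t (k+1) ≤ n^δ` for large `n`
because `log n = o(n^(δ-α))`: this is a forbidden factorization of `M`.
-/

open Matrix Filter Asymptotics

/-- `M` is `(m,n,r,t)`-row rigid (with real parameters): every matrix differing from `M`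
in at most `t` entries in each row has rank at least `r`. -/
def RowRigidR {F : Type*} [Field F] {m n : ℕ} (r t : ℝ)
    (M : Matrix (Fin m) (Fin n) F) : Prop :=
  ∀ N : Matrix (Fin m) (Fin n) F,
    (∀ i, ({j | M i j ≠ N i j}.ncard : ℝ) ≤ t) → r ≤ (N.rank : ℝ)

theorem Matrix.exists_submatrix_cols_mul_eq {F m n : Type*} [Field F] [Fintype n]
    (N : Matrix m n F) :
    ∃ (d : ℕ) (g : Fin d → n) (C : Matrix (Fin d) n F),
      d ≤ N.rank ∧ N = N.submatrix id g * C := by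
  obtain ⟨κ, a, ha, hspan, hli⟩ := exists_linearIndependent' F N.col
  have : Finite κ := Finite.of_injective a ha
  let e := Finite.equivFin κ
  set g := a ∘ e.symm
  have hrange : Set.range (N.col ∘ g) = Set.range (N.col ∘ a) := by
    simp only [g, ← Function.comp_assoc, EquivLike.range_comp]
  have hli' : LinearIndependent F (N.col ∘ g) := hli.comp e.symm e.symm.injective
  have hrank : Nat.card κ = N.rank := by
    rw [rank_eq_finrank_span_cols, ← hspan, ← hrange, finrank_span_eq_card hli', Fintype.card_fin]
  have hcol (j : n) : ∃ c : Fin (Nat.card κ) → F, ∑ i, c i • N.col (g i) = N.col j := by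
    refine (Submodule.mem_span_range_iff_exists_fun F).mp ?_
    change N.col j ∈ Submodule.span F (Set.range (N.col ∘ g))
    rw [hrange, hspan]
    exact Submodule.subset_span ⟨j, rfl⟩
  choose c hc using hcol
  refine ⟨Nat.card κ, g, of fun i j => c j i, hrank.le, ?_⟩
  ext i j
  simpa [mul_apply, mul_comm] using (congrFun (hc j) i).symm

theorem Matrix.eq_fromCols_mul_fromRows_of_submatrix {R l m n o : Type*} [Ring R] [Fintype m]
    [Fintype n] [DecidableEq m] [Fintype o]
    {A N E : Matrix l m R} {g : n → m} {C : Matrix n m R} {Q : Matrix l o R} {P : Matrix o n R}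
    (hA : A = N + E) (hN : N = N.submatrix id g * C) (hAg : A.submatrix id g = Q * P) :
    A = fromCols Q E * fromRows (P * C) (1 - (1 : Matrix m m R).submatrix id g * C) := by
  have hEg : E * (1 : Matrix m m R).submatrix id g = E.submatrix id g :=
    mul_submatrix_one (Equiv.refl m) g E
  have hNg : N.submatrix id g = Q * P - E.submatrix id g := by
    rw [← hAg, hA]; ext; simp
  calc A = N.submatrix id g * C + E := by rw [← hN, hA]
    _ = (Q * P - E.submatrix id g) * C + E := by rw [hNg]
    _ = Q * (P * C) + E * (1 - (1 : Matrix m m R).submatrix id g * C) := by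
      rw [Matrix.sub_mul, Matrix.mul_sub, Matrix.mul_one, ← Matrix.mul_assoc E, hEg,
        Matrix.mul_assoc]
      abel
    _ = _ := (fromCols_mul_fromRows ..).symm

theorem ncard_row_support_fromCols_le {R ι : Type*} [Zero R] {a b : ℕ} (Q : Matrix ι (Fin a) R)
    (E : Matrix ι (Fin b) R) (i : ι) :
    {j | (fromCols Q E).submatrix id finSumFinEquiv.symm i j ≠ 0}.ncard ≤
      {j | Q i j ≠ 0}.ncard + {j | E i j ≠ 0}.ncard := by
  have hsupp : {j | (fromCols Q E).submatrix id finSumFinEquiv.symm i j ≠ 0} =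
      finSumFinEquiv '' (Sum.inl '' {j | Q i j ≠ 0} ∪ Sum.inr '' {j | E i j ≠ 0}) := by
    rw [Equiv.image_eq_preimage_symm]
    ext j
    rcases h : finSumFinEquiv.symm j with j' | j' <;> simp [h]
  rw [hsupp, Set.ncard_image_of_injective _ finSumFinEquiv.injective]
  refine (Set.ncard_union_le _ _).trans ?_
  rw [Set.ncard_image_of_injective _ Sum.inl_injective,
    Set.ncard_image_of_injective _ Sum.inr_injective]

section SparseFactorization

variable {F : Type*} [Field F] {m n : ℕ}

def HasSparseFactorization (M : Matrix (Fin m) (Fin n) F) (s w : ℝ) : Prop :=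
  ∃ (s' : ℕ) (Q : Matrix (Fin m) (Fin s') F) (P : Matrix (Fin s') (Fin n) F),
    (s' : ℝ) ≤ s ∧ (∀ i, ({j | Q i j ≠ 0}.ncard : ℝ) ≤ w) ∧ M = Q * P

theorem HasSparseFactorization.mono {M : Matrix (Fin m) (Fin n) F} {s s' w w' : ℝ}
    (h : HasSparseFactorization M s w) (hs : s ≤ s') (hw : w ≤ w') :
    HasSparseFactorization M s' w' :=
  let ⟨k, Q, P, hk, hQ, hM⟩ := h
  ⟨k, Q, P, hk.trans hs, fun i => (hQ i).trans hw, hM⟩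

theorem hasSparseFactorization_self (M : Matrix (Fin m) (Fin n) F) :
    HasSparseFactorization M n n := by
  refine ⟨n, M, 1, le_rfl, fun i => ?_, (Matrix.mul_one M).symm⟩
  simpa using Set.ncard_le_card {j | M i j ≠ 0}

theorem hasSparseFactorization_of_not_rowRigid {ε t w : ℝ} (hε1 : ε < 1)
    {A : Matrix (Fin m) (Fin n) F} (hA : ¬ RowRigidR (ε * n) t A)
    (ih : ∀ (d : ℕ) (g : Fin d → Fin n), (d : ℝ) < ε * n →
      HasSparseFactorization (A.submatrix id g) (d / (1 - ε)) w) :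
    HasSparseFactorization A (n / (1 - ε)) (w + t) := by
  simp only [RowRigidR, not_forall, not_le] at hA
  obtain ⟨N, hNA, hNrank⟩ := hA
  obtain ⟨d, g, C, hd, hNC⟩ := N.exists_submatrix_cols_mul_eq
  have hdε : (d : ℝ) < ε * n := lt_of_le_of_lt (by exact_mod_cast hd) hNrank
  obtain ⟨s, Q, P, hs, hQ, hQP⟩ := ih d g hdε
  have h1ε : 0 < 1 - ε := sub_pos.mpr hε1
  refine ⟨s + n, (fromCols Q (A - N)).submatrix id finSumFinEquiv.symm,
    (fromRows (P * C) (1 - (1 : Matrix (Fin n) (Fin n) F).submatrix id g * C)).submatrix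
      finSumFinEquiv.symm id, ?_, fun i => ?_, ?_⟩
  · rw [le_div_iff₀ h1ε] at hs ⊢
    push_cast
    nlinarith
  · have hE : {j | (A - N) i j ≠ 0} = {j | A i j ≠ N i j} := by
      simp only [Matrix.sub_apply, sub_ne_zero]
    calc _ ≤ (({j | Q i j ≠ 0}.ncard + {j | (A - N) i j ≠ 0}.ncard : ℕ) : ℝ) := by
          exact_mod_cast ncard_row_support_fromCols_le Q (A - N) i
      _ ≤ w + t := by push_cast; rw [hE]; exact add_le_add (hQ i) (hNA i)
  · rw [submatrix_mul_equiv, submatrix_id_id]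
    exact eq_fromCols_mul_fromRows_of_submatrix (add_sub_cancel N A).symm hNC hQP

theorem hasSparseFactorization_submatrix_of_forall_not_rowRigid {ε t : ℝ} (hε0 : 0 ≤ ε)
    (hε1 : ε < 1) (M : Matrix (Fin m) (Fin n) F)
    (hM : ∀ (n' : ℕ) (f : Fin n' → Fin n), t ≤ n' → ¬ RowRigidR (ε * n') t (M.submatrix id f))
    (k : ℕ) {n' : ℕ} (f : Fin n' → Fin n) (hn' : n' * ε ^ k < t) :
    HasSparseFactorization (M.submatrix id f) (n' / (1 - ε)) (t * (k + 1)) := by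
  have h1ε : 0 < 1 - ε := sub_pos.mpr hε1
  have hbase {n' : ℕ} (f : Fin n' → Fin n) (h : (n' : ℝ) < t) :
      HasSparseFactorization (M.submatrix id f) (n' / (1 - ε)) t :=
    (hasSparseFactorization_self _).mono (le_div_self n'.cast_nonneg h1ε (by linarith)) h.le
  induction k generalizing n' with
  | zero => simpa using hbase f (by simpa using hn')
  | succ k ih =>
    by_cases hsmall : (n' : ℝ) < t
    · exact (hbase f hsmall).mono le_rfl (le_mul_of_one_le_right (by linarith) (by linarith))
    refine (hasSparseFactorization_of_not_rowRigid (w := t * (k + 1)) hε1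
      (hM n' f (not_lt.mp hsmall)) fun d g hd => ?_).mono le_rfl (by push_cast; linarith)
    rw [submatrix_submatrix]
    refine ih (f ∘ g) ?_
    calc (d : ℝ) * ε ^ k ≤ ε * n' * ε ^ k := by gcongr
      _ = n' * ε ^ (k + 1) := by ring
      _ < t := hn'

end SparseFactorization

theorem eventually_mul_log_add_le_rpow (c b : ℝ) {β : ℝ} (hβ : 0 < β) :
    ∀ᶠ x : ℝ in atTop, c * Real.log x + b ≤ x ^ β := by
  have hb : (fun _ : ℝ => b) =o[atTop] fun x => x ^ β :=
    isLittleO_const_left.mpr <| Or.inr <|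
      tendsto_norm_atTop_atTop.comp (tendsto_rpow_atTop hβ)
  filter_upwards [(((isLittleO_log_rpow_atTop hβ).const_mul_left c).add hb).bound one_pos,
    eventually_ge_atTop 0] with x hx hx0
  rw [one_mul, Real.norm_of_nonneg (Real.rpow_nonneg hx0 β)] at hx
  exact (le_abs_self _).trans hx

theorem eventually_exists_pow_mul_lt_rpow {ε α δ : ℝ} (hε0 : 0 < ε) (hε1 : ε < 1) (hα1 : α < 1)
    (hαδ : α < δ) :
    ∀ᶠ n : ℕ in atTop, ∃ k : ℕ,
      (n : ℝ) * ε ^ k < (n : ℝ) ^ α ∧ (n : ℝ) ^ α * (k + 1) ≤ (n : ℝ) ^ δ := by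
  have hlogε : 0 < -Real.log ε := neg_pos.mpr (Real.log_neg hε0 hε1)
  set c := (1 - α) / -Real.log ε
  filter_upwards [tendsto_natCast_atTop_atTop.eventually
    (eventually_mul_log_add_le_rpow c 2 (sub_pos.mpr hαδ)), eventually_ge_atTop 1] with n hn hn1
  have hn0 : (0 : ℝ) < n := by exact_mod_cast hn1
  set k := ⌊c * Real.log n⌋₊ + 1
  have hk : c * Real.log n < k := by push_cast [k]; exact Nat.lt_floor_add_one _
  refine ⟨k, ?_, ?_⟩
  · -- taking logarithms, this is `c * log n < k`
    rw [← Real.log_lt_log_iff (by positivity) (by positivity),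
      Real.log_mul hn0.ne' (by positivity), Real.log_pow, Real.log_rpow hn0]
    rw [div_mul_eq_mul_div, div_lt_iff₀ hlogε] at hk
    linarith
  · have hk2 : (k : ℝ) + 1 ≤ c * Real.log n + 2 := by
      have := Nat.floor_le (by positivity : 0 ≤ c * Real.log n)
      push_cast [k]; linarith
    calc (n : ℝ) ^ α * (k + 1) ≤ (n : ℝ) ^ α * (n : ℝ) ^ (δ - α) := by gcongr; linarith
      _ = (n : ℝ) ^ δ := by rw [← Real.rpow_add hn0]; ring_nf

theorem polynomial_lds_lower_bound_gives_rigid_submatrix_general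
    (ε δ α : ℝ) (hε0 : 0 < ε) (hε1 : ε < 1) (hδ1 : δ < 1)
    (hαδ : α < δ) :
    ∃ N : ℕ, ∀ (F : Type) (_ : Field F) (n : ℕ), N ≤ n → ∀ (m : ℕ),
      ∀ M : Matrix (Fin m) (Fin n) F,
        (¬ ∃ (s : ℕ) (Q : Matrix (Fin m) (Fin s) F) (P : Matrix (Fin s) (Fin n) F),
          (s : ℝ) ≤ (n : ℝ) / (1 - ε) ∧
          (∀ i, ({j | Q i j ≠ 0}.ncard : ℝ) ≤ (n : ℝ) ^ δ) ∧
          M = Q * P) →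
        ∃ (n' : ℕ) (f : Fin n' → Fin n),
          (n : ℝ) ^ α ≤ (n' : ℝ) ∧
          RowRigidR (ε * n') ((n : ℝ) ^ α) (M.submatrix id f) := by
  obtain ⟨N, hN⟩ := eventually_atTop.mp
    (eventually_exists_pow_mul_lt_rpow hε0 hε1 (hαδ.trans hδ1) hαδ)
  refine ⟨N, fun F _ n hn m M hM => ?_⟩
  by_contra! hnotRigid
  obtain ⟨k, hdepth, hsparse⟩ := hN n hn
  have hfac := hasSparseFactorization_submatrix_of_forall_not_rowRigid hε0.le hε1 M
    hnotRigid k id hdepth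
  exact hM ((submatrix_id_id M ▸ hfac).mono le_rfl (by linarith))

/-- polynomial lower bounds: for all constants `ε, δ ∈ (0,1)` and
`0 < α < δ` there exists `N` such that for every field `F`, every `n ≥ N` and every `m`:
if `M ∈ F^{m×n}` admits no factorization `M = Q * P` with `s ≤ n/(1-ε)` and each row of
`Q` having at most `n^δ` nonzero entries, then `M` contains a submatrix on `n' ≥ n^α`
of its columns which is `(m, n', ε·n', n^α)`-row rigid. -/
theorem polynomial_lds_lower_bound_gives_rigid_submatrix
    (ε δ α : ℝ) (hε0 : 0 < ε) (hε1 : ε < 1) (hδ0 : 0 < δ) (hδ1 : δ < 1)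
    (hα0 : 0 < α) (hαδ : α < δ) :
    ∃ N : ℕ, ∀ (F : Type) (_ : Field F) (n : ℕ), N ≤ n → ∀ (m : ℕ),
      ∀ M : Matrix (Fin m) (Fin n) F,
        (¬ ∃ (s : ℕ) (Q : Matrix (Fin m) (Fin s) F) (P : Matrix (Fin s) (Fin n) F),
          (s : ℝ) ≤ (n : ℝ) / (1 - ε) ∧
          (∀ i, ({j | Q i j ≠ 0}.ncard : ℝ) ≤ (n : ℝ) ^ δ) ∧
          M = Q * P) →
        ∃ (n' : ℕ) (f : Fin n' → Fin n),
          (n : ℝ) ^ α ≤ (n' : ℝ) ∧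
          RowRigidR (ε * n') ((n : ℝ) ^ α) (M.submatrix id f) :=
  polynomial_lds_lower_bound_gives_rigid_submatrix_general ε δ α hε0 hε1 hδ1 hαδ
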